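/- arXiv:2106.14980 — 6 statements merged into one kernel-verified Lean document; each statement's English description precedes it below -/
import Mathlib

section
/- Let d ∈ ℤ_{≥1}, let n ≥ 2, and let A ∈ ℤ^{m×n} with m ≥ n be nondegenerate, i.e., every n×n subdeterminant of A is nonzero. If |D(A)| ≤ d, then m ≤ (n−1) + d·(2·d + 1). -/
/-!
Fix `n - 2` rows of `A` and let `ω x y` be the determinant of the matrix formed by them together
with `x` and `y` in two further positions; `ω` is bilinear and alternating, and nondegeneracy says
`ω x y ≠ 0` for distinct rows `x, y` outside the fixed ones. Pick two such rows `p, q`. If two other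
rows `x ≠ y` had `(ω p x, ω q x) = ±(ω p y, ω q y)`, then `z = x ∓ y` would satisfy
`ω p z = ω q z = 0`; as `p`, `q` and the fixed rows form a basis (up to the factor `ω p q`, via the
adjugate), `ω · z` vanishes identically, contradicting `ω x z = ∓ ω x y ≠ 0`. So the remaining
`m - n` rows inject, up to sign, into pairs of integers whose absolute values lie in `D(A)`, whence
`m - n ≤ 2 |D(A)|² ≤ 2 d² ≤ d (2 d + 1) - 1`.
-/

/-- `detSet A` is the set of absolute values of the `n × n` subdeterminants of `A`,
i.e. `D(A) = {|det(A_{I,·})| : I ⊆ [m], |I| = n}`. -/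
def detSet {m n : ℕ} (A : Matrix (Fin m) (Fin n) ℤ) : Set ℤ :=
  {d : ℤ | ∃ f : Fin n → Fin m, Function.Injective f ∧ d = |(A.submatrix f id).det|}

namespace Matrix

variable {R : Type*} [CommRing R] {n : Type*} [Fintype n] [DecidableEq n]

theorem linearMap_eq_zero_of_map_rows_eq_zero [NoZeroDivisors R] {M : Matrix n n R}
    (hM : M.det ≠ 0) (φ : (n → R) →ₗ[R] R) (hφ : ∀ i, φ (M i) = 0) : φ = 0 := by
  refine LinearMap.ext fun x => ?_
  have hcomb : ∀ y, φ (y ᵥ* M) = 0 := fun y => by simp [vecMul_eq_sum, hφ]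
  have hx : M.det • x = (x ᵥ* M.adjugate) ᵥ* M := by
    rw [vecMul_vecMul, adjugate_mul, vecMul_smul, vecMul_one]
  have h := hcomb (x ᵥ* M.adjugate)
  rw [← hx, map_smul, smul_eq_mul] at h
  exact (mul_eq_zero.1 h).resolve_left hM

def detWithRows (M : Matrix n n R) (s t : n) (x y : n → R) : R :=
  ((M.updateRow s x).updateRow t y).det

variable {M : Matrix n n R} {s t : n}

theorem detWithRows_self (hst : s ≠ t) (x : n → R) : M.detWithRows s t x x = 0 :=
  det_zero_of_row_eq hst (by simp [hst])

theorem detWithRows_sub_smul (x y z : n → R) (c : R) :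
    M.detWithRows s t x (y - c • z) = M.detWithRows s t x y - c * M.detWithRows s t x z := by
  rw [detWithRows, sub_eq_add_neg, ← neg_smul, det_updateRow_add, det_updateRow_smul]
  simp only [detWithRows]
  ring

theorem detWithRows_eq_zero_of_pair [NoZeroDivisors R] (hst : s ≠ t) {p q z : n → R}
    (hpq : M.detWithRows s t p q ≠ 0) (hp : M.detWithRows s t p z = 0)
    (hq : M.detWithRows s t q z = 0) (x : n → R) : M.detWithRows s t x z = 0 := by
  let φ := (detRowAlternating : (n → R) [⋀^n]→ₗ[R] R).toMultilinearMap.toLinearMap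
    (M.updateRow t z) s
  have hφ : ∀ y, φ y = M.detWithRows s t y z := fun y => by
    rw [detWithRows, updateRow_comm _ hst]
    exact MultilinearMap.toLinearMap_apply _ _ _ _
  have hrows : ∀ k, φ (((M.updateRow s p).updateRow t q) k) = 0 := by
    intro k
    rw [hφ]
    by_cases hkt : k = t
    · simpa [hkt] using hq
    by_cases hks : k = s
    · simpa [hks, hst] using hp
    rw [updateRow_ne hkt, updateRow_ne hks]
    exact det_zero_of_row_eq (Ne.symm hks) (by simp [hst, hks, hkt])
  rw [← hφ, linearMap_eq_zero_of_map_rows_eq_zero hpq φ hrows, LinearMap.zero_apply]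

theorem detWithRows_not_proportional [NoZeroDivisors R] (hst : s ≠ t) {p q x y : n → R}
    (hpq : M.detWithRows s t p q ≠ 0) (hxy : M.detWithRows s t x y ≠ 0) {c : R} (hc : c ≠ 0) :
    ¬ (M.detWithRows s t p x = c * M.detWithRows s t p y ∧
      M.detWithRows s t q x = c * M.detWithRows s t q y) := by
  rintro ⟨hp, hq⟩
  have h := detWithRows_eq_zero_of_pair hst hpq (z := x - c • y)
    (by rw [detWithRows_sub_smul, hp, sub_self]) (by rw [detWithRows_sub_smul, hq, sub_self]) x
  rw [detWithRows_sub_smul, detWithRows_self hst, zero_sub, neg_eq_zero] at h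
  exact mul_ne_zero hc hxy h

theorem det_submatrix_update_update {ι : Type*} [DecidableEq ι] (A : Matrix ι n R) (g : n → ι)
    (i j : ι) :
    (A.submatrix (Function.update (Function.update g s i) t j) id).det
      = (A.submatrix g id).detWithRows s t (A i) (A j) := by
  rw [detWithRows]
  congr 1
  ext a b
  by_cases hat : a = t
  · simp [hat]
  by_cases has : a = s
  · subst has
    simp [hat]
  · simp [has, hat]

end Matrix

theorem Finset.card_le_of_injOn_up_to_neg {ι : Type*} (S : Finset ι) (V : Finset ℤ)
    (w : ι → ℤ × ℤ) (hw : ∀ i ∈ S, |(w i).1| ∈ V ∧ |(w i).2| ∈ V)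
    (hinj : ∀ i ∈ S, ∀ j ∈ S, w i = w j ∨ w i = -w j → i = j) :
    S.card ≤ 2 * V.card ^ 2 := by
  classical
  -- choosing the representative of `±v` with nonnegative first coordinate saves a factor `2`
  let normalize : ℤ × ℤ → ℤ × ℤ := fun v => if 0 < v.1 then v else -v
  have hnormalize_fst : ∀ v, (normalize v).1 = |v.1| := fun v => by
    by_cases h : 0 < v.1
    · simp [normalize, h, abs_of_pos h]
    · simp [normalize, h, abs_of_nonpos (not_lt.1 h)]
  have hnormalize_snd : ∀ v, |(normalize v).2| = |v.2| := fun v => by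
    by_cases h : 0 < v.1 <;> simp [normalize, h]
  have hnormalize_eq : ∀ u v, normalize u = normalize v → u = v ∨ u = -v := fun u v => by
    simp only [normalize]
    split_ifs <;> intro h <;> simp_all [neg_eq_iff_eq_neg]
  have hsigned : ∀ x : ℤ, |x| ∈ V → x ∈ V ∪ V.image (fun x : ℤ => -x) := fun x hx => by
    rcases abs_choice x with h | h
    · exact mem_union_left _ (h ▸ hx)
    · exact mem_union_right _ (mem_image.2 ⟨|x|, hx, by simp [h]⟩)
  calc S.card ≤ (V ×ˢ (V ∪ V.image (fun x : ℤ => -x)) : Finset (ℤ × ℤ)).card := by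
        refine card_le_card_of_injOn (normalize ∘ w) (fun i hi => ?_)
          (fun i hi j hj hij => hinj i hi j hj (hnormalize_eq _ _ hij))
        refine mem_product.2 ⟨?_, hsigned _ ?_⟩
        · simpa [hnormalize_fst] using (hw i hi).1
        · simpa [hnormalize_snd] using (hw i hi).2
    _ ≤ V.card * (V.card + V.card) := by
        rw [card_product]
        gcongr
        exact (card_union_le _ _).trans (Nat.add_le_add_left card_image_le _)
    _ = 2 * V.card ^ 2 := by ring

theorem Function.Injective.update_update {α β : Type*} [DecidableEq α] {g : α → β}
    (hg : Function.Injective g) {s t : α} {i j : β}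
    (hi : ∀ k, k ≠ s → k ≠ t → g k ≠ i) (hj : ∀ k, k ≠ s → k ≠ t → g k ≠ j) (hij : i ≠ j) :
    Function.Injective (Function.update (Function.update g s i) t j) := by
  intro a b h
  simp only [Function.update_apply] at h
  split_ifs at h <;> grind [Function.Injective]

section FreeRows

variable {m n : ℕ}

def freeRows (g : Fin n → Fin m) (s t : Fin n) : Finset (Fin m) :=
  (({s, t}ᶜ : Finset (Fin n)).image g)ᶜ

theorem mem_freeRows {g : Fin n → Fin m} {s t : Fin n} {i : Fin m} :
    i ∈ freeRows g s t ↔ ∀ k, k ≠ s → k ≠ t → g k ≠ i := by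
  simp [freeRows]

theorem card_freeRows {g : Fin n → Fin m} (hg : Function.Injective g) {s t : Fin n}
    (hst : s ≠ t) : (freeRows g s t).card = m - (n - 2) := by
  rw [freeRows, Finset.card_compl, Finset.card_image_of_injective _ hg, Finset.card_compl,
    Finset.card_pair hst, Fintype.card_fin, Fintype.card_fin]

theorem apply_mem_freeRows {g : Fin n → Fin m} (hg : Function.Injective g) {s t k : Fin n}
    (hk : k = s ∨ k = t) : g k ∈ freeRows g s t :=
  mem_freeRows.2 fun k' hs ht => hg.ne (by rcases hk with rfl | rfl <;> assumption)

theorem detSet_finite (A : Matrix (Fin m) (Fin n) ℤ) : (detSet A).Finite :=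
  (Set.finite_range fun f : Fin n → Fin m => |(A.submatrix f id).det|).subset
    (by rintro _ ⟨f, -, rfl⟩; exact ⟨f, rfl⟩)

variable {A : Matrix (Fin m) (Fin n) ℤ} {g : Fin n → Fin m} {s t : Fin n} {i j : Fin m}

theorem detWithRows_ne_zero
    (hA : ∀ f : Fin n → Fin m, Function.Injective f → (A.submatrix f id).det ≠ 0)
    (hg : Function.Injective g) (hi : i ∈ freeRows g s t) (hj : j ∈ freeRows g s t)
    (hij : i ≠ j) : (A.submatrix g id).detWithRows s t (A i) (A j) ≠ 0 := by
  rw [← Matrix.det_submatrix_update_update]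
  exact hA _ (hg.update_update (mem_freeRows.1 hi) (mem_freeRows.1 hj) hij)

theorem abs_detWithRows_mem_detSet (hg : Function.Injective g) (hi : i ∈ freeRows g s t)
    (hj : j ∈ freeRows g s t) (hij : i ≠ j) :
    |(A.submatrix g id).detWithRows s t (A i) (A j)| ∈ detSet A :=
  ⟨_, hg.update_update (mem_freeRows.1 hi) (mem_freeRows.1 hj) hij,
    by rw [Matrix.det_submatrix_update_update]⟩

theorem card_freeRows_sdiff_le
    (hA : ∀ f : Fin n → Fin m, Function.Injective f → (A.submatrix f id).det ≠ 0)
    (hg : Function.Injective g) (hst : s ≠ t) :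
    (freeRows g s t \ {g s, g t}).card ≤ 2 * (detSet A).ncard ^ 2 := by
  set ω : Fin m → Fin m → ℤ := fun i j => (A.submatrix g id).detWithRows s t (A i) (A j)
  have hgs : g s ∈ freeRows g s t := apply_mem_freeRows hg (.inl rfl)
  have hgt : g t ∈ freeRows g s t := apply_mem_freeRows hg (.inr rfl)
  have hpq : ω (g s) (g t) ≠ 0 := detWithRows_ne_zero hA hg hgs hgt (hg.ne hst)
  rw [Set.ncard_eq_toFinset_card _ (detSet_finite A)]
  refine Finset.card_le_of_injOn_up_to_neg _ _ (fun i => (ω (g s) i, ω (g t) i))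
    (fun i hi => ?_) (fun i hi j hj hij => ?_)
  · simp only [Finset.mem_sdiff, Finset.mem_insert, Finset.mem_singleton, not_or] at hi
    simp only [Set.Finite.mem_toFinset]
    exact ⟨abs_detWithRows_mem_detSet hg hgs hi.1 (Ne.symm hi.2.1),
      abs_detWithRows_mem_detSet hg hgt hi.1 (Ne.symm hi.2.2)⟩
  · simp only [Finset.mem_sdiff] at hi hj
    by_contra hne
    have hxy : ω i j ≠ 0 := detWithRows_ne_zero hA hg hi.1 hj.1 hne
    rcases hij with h | h
    · exact Matrix.detWithRows_not_proportional hst hpq hxy one_ne_zero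
        (by simpa [Prod.ext_iff] using h)
    · exact Matrix.detWithRows_not_proportional hst hpq hxy (neg_ne_zero.2 one_ne_zero)
        (by simpa [Prod.ext_iff] using h)

end FreeRows

/-- If `A ∈ ℤ^{m×n}` (`m ≥ n`, `n ≥ 2`) is nondegenerate (all `n×n` subdeterminants are
nonzero) and `|D(A)| ≤ d`, then `m ≤ (n-1) + d(2d+1)`. -/
theorem stmt1 (d m n : ℕ) (hd : 1 ≤ d) (hn : 2 ≤ n) (hmn : n ≤ m)
    (A : Matrix (Fin m) (Fin n) ℤ)
    (hnondeg : ∀ f : Fin n → Fin m, Function.Injective f → (A.submatrix f id).det ≠ 0)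
    (hcard : (detSet A).ncard ≤ d) :
    m ≤ (n - 1) + d * (2 * d + 1) := by
  set s : Fin n := ⟨0, by omega⟩
  set t : Fin n := ⟨1, by omega⟩
  have hst : s ≠ t := by simp [s, t, Fin.ext_iff]
  have hg := Fin.castLE_injective hmn
  have hcount := card_freeRows_sdiff_le hnondeg hg hst
  have hsplit := Finset.card_le_card_sdiff_add_card (s := freeRows (Fin.castLE hmn) s t)
    (t := {Fin.castLE hmn s, Fin.castLE hmn t})
  rw [card_freeRows hg hst] at hsplit
  have hpair := Finset.card_le_two (a := Fin.castLE hmn s) (b := Fin.castLE hmn t)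
  have hsq : (detSet A).ncard ^ 2 ≤ d ^ 2 := Nat.pow_le_pow_left hcard 2
  have hexpand : d * (2 * d + 1) = 2 * d ^ 2 + d := by ring
  omega
end

section
/- Let A ∈ ℤ^{m×n} with m ≥ n and rank(A) = n, and let γ be the greatest common divisor of the elements of D(A) (which contains a nonzero element since rank(A) = n). Then there exists an integer matrix A' ∈ ℤ^{m×n} such that D(A') = {k/γ : k ∈ D(A)}; moreover, A' can be taken of the form A' = A·Q·S^{−1}, where Q ∈ ℤ^{n×n} is unimodular and S ∈ ℤ^{n×n} is a diagonal matrix with positive diagonal entries whose product equals γ, such that A·Q·S^{−1} is integral. -/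
/-!
The columns of `A` span a rank `n` sublattice of `ℤ^m`. Its Smith normal form yields a
unimodular `Q` with `A Q = P D`, where `D` is diagonal with positive entries and the columns of
`P` are part of a basis of `ℤ^m`, so that `P` has a left inverse `B`. Every maximal minor of `A`
is then `± det D` times the corresponding minor of `P`, hence `det D ∣ γ`. Conversely, expanding
`det D = det (B A Q)` by multilinearity in the rows writes it as a combination of maximal minors
of `A Q`, all divisible by `γ`. So `det D = γ`, and `A' = P` works.
-/

open Matrix

namespace Matrix

variable {R ι : Type*}

theorem det_mul_eq_sum_prod_mul_det_submatrix {m n : Type*} [CommRing R] [Fintype m]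
    [Fintype n] [DecidableEq n] (B : Matrix n m R) (C : Matrix m n R) :
    (B * C).det = ∑ p : n → m, (∏ i, B i (p i)) * (C.submatrix p id).det :=
  calc (B * C).det = detRowAlternating fun i ↦ ∑ k, B i k • C k := by
        congr 1
        ext i j
        simp [mul_apply]
    _ = ∑ p : n → m, detRowAlternating fun i ↦ B i (p i) • C (p i) :=
        MultilinearMap.map_sum _ _
    _ = _ := by
        simp only [AlternatingMap.map_smul_univ, smul_eq_mul]
        rfl

theorem dvd_det_mul_of_forall_dvd_det_submatrix {m n : Type*} [CommRing R] [Fintype m]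
    [Fintype n] [DecidableEq n] (B : Matrix n m R) (C : Matrix m n R) {d : R}
    (hC : ∀ p : n → m, Function.Injective p → d ∣ (C.submatrix p id).det) :
    d ∣ (B * C).det := by
  rw [det_mul_eq_sum_prod_mul_det_submatrix]
  refine Finset.dvd_sum fun p _ ↦ Dvd.dvd.mul_left ?_ _
  by_cases hp : Function.Injective p
  · exact hC p hp
  · obtain ⟨i, j, hpij, hij⟩ := Function.not_injective_iff.mp hp
    rw [det_zero_of_row_eq hij (by ext; simp [hpij])]
    exact dvd_zero d

theorem det_submatrix_mul {n : Type*} [CommRing R] [Fintype n] [DecidableEq n]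
    (M : Matrix ι n R) (N : Matrix n n R) (p : n → ι) :
    ((M * N).submatrix p id).det = (M.submatrix p id).det * N.det := by
  rw [submatrix_mul _ _ _ _ _ Function.bijective_id, submatrix_id_id, det_mul]

theorem exists_isUnit_det_mul_eq_mul_diagonal [CommRing R] [IsDomain R]
    [IsPrincipalIdealRing R] [Fintype ι] [DecidableEq ι] {n : ℕ} (A : Matrix ι (Fin n) R)
    (hA : A.rank = n) :
    ∃ (Q : Matrix (Fin n) (Fin n) R) (P : Matrix ι (Fin n) R) (B : Matrix (Fin n) ι R)
      (a : Fin n → R),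
      IsUnit Q.det ∧ B * P = 1 ∧ A * Q = P * diagonal a ∧ ∀ i, a i ≠ 0 := by
  obtain ⟨r, snf⟩ := (LinearMap.range A.mulVecLin).smithNormalForm (Pi.basisFun R ι)
  obtain rfl : n = r := by
    rw [← hA, Matrix.rank, Module.finrank_eq_card_basis snf.bN, Fintype.card_fin]
  -- `A` maps `R^n` onto its column lattice `≅ R^n`, hence bijectively (Orzech property).
  have hA_bij : Function.Bijective A.mulVecLin.rangeRestrict :=
    OrzechProperty.bijective_of_surjective_of_injective snf.bN.equivFun.symm.toLinearMap _
      snf.bN.equivFun.symm.injective A.mulVecLin.surjective_rangeRestrict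
  let e := LinearEquiv.ofBijective _ hA_bij
  refine ⟨(Pi.basisFun R (Fin n)).toMatrix (snf.bN.map e.symm),
    ((Pi.basisFun R ι).toMatrix snf.bM).submatrix id snf.f,
    (snf.bM.toMatrix (Pi.basisFun R ι)).submatrix snf.f id, snf.a, ?_, ?_, ?_, ?_⟩
  · exact isUnit_det_of_left_inverse (Module.Basis.toMatrix_mul_toMatrix_flip _ _)
  · rw [← submatrix_mul _ _ _ _ _ Function.bijective_id, Module.Basis.toMatrix_mul_toMatrix_flip,
      submatrix_one _ snf.f.injective]
  · ext i j
    have hcol : A *ᵥ e.symm (snf.bN j) = snf.a j • snf.bM (snf.f j) :=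
      (congrArg Subtype.val (e.apply_symm_apply (snf.bN j))).trans (snf.snf j)
    rw [mul_diagonal]
    simpa [mul_apply, mulVec, dotProduct, Module.Basis.toMatrix_apply, mul_comm]
      using congrFun hcol i
  · intro i hi
    exact snf.bN.ne_zero i (Subtype.ext (by rw [snf.snf, hi, zero_smul]; rfl))

theorem exists_isUnit_det_mul_eq_mul_diagonal_pos [Fintype ι] [DecidableEq ι] {n : ℕ}
    (A : Matrix ι (Fin n) ℤ) (hA : A.rank = n) :
    ∃ (Q : Matrix (Fin n) (Fin n) ℤ) (P : Matrix ι (Fin n) ℤ) (B : Matrix (Fin n) ι ℤ)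
      (d : Fin n → ℤ),
      IsUnit Q.det ∧ B * P = 1 ∧ A * Q = P * diagonal d ∧ ∀ i, 0 < d i := by
  obtain ⟨Q, P, B, a, hQ, hBP, hAQ, ha⟩ := A.exists_isUnit_det_mul_eq_mul_diagonal hA
  refine ⟨Q * diagonal fun i ↦ (a i).sign, P, B, fun i ↦ |a i|, ?_, hBP, ?_,
    fun i ↦ abs_pos.2 (ha i)⟩
  · rw [det_mul, det_diagonal]
    exact hQ.mul <| IsUnit.prod_iff.2 fun i _ ↦
      Int.isUnit_iff_abs_eq.2 (Int.abs_sign_of_ne_zero (ha i))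
  · rw [← Matrix.mul_assoc, hAQ, Matrix.mul_assoc, diagonal_mul_diagonal]
    simp_rw [mul_comm (a _), Int.sign_mul_self_eq_abs]

theorem abs_det_submatrix_eq_prod_mul_of_mul_eq_mul_diagonal {n : Type*} [Fintype n]
    [DecidableEq n] {A P : Matrix ι n ℤ} {Q : Matrix n n ℤ} {d : n → ℤ} (hQ : IsUnit Q.det)
    (hAQ : A * Q = P * diagonal d) (hd : ∀ i, 0 < d i) (p : n → ι) :
    |(A.submatrix p id).det| = (∏ i, d i) * |(P.submatrix p id).det| := by
  have h := congrArg (fun M ↦ |(M.submatrix p id).det|) hAQ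
  simp only [det_submatrix_mul, abs_mul, Int.isUnit_iff_abs_eq.1 hQ, mul_one, det_diagonal,
    abs_of_pos (Finset.prod_pos fun i _ ↦ hd i)] at h
  rw [h, mul_comm]

end Matrix

theorem detSet_eq_image_mul {m n : ℕ} {A P : Matrix (Fin m) (Fin n) ℤ} {c : ℤ}
    (h : ∀ p : Fin n → Fin m, |(A.submatrix p id).det| = c * |(P.submatrix p id).det|) :
    detSet A = (c * ·) '' detSet P := by
  ext k
  constructor
  · rintro ⟨p, hp, rfl⟩
    exact ⟨_, ⟨p, hp, rfl⟩, (h p).symm⟩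
  · rintro ⟨_, ⟨p, hp, rfl⟩, rfl⟩
    exact ⟨p, hp, (h p).symm⟩

theorem stmt2_general (m n : ℕ) (A : Matrix (Fin m) (Fin n) ℤ)
    (hrank : A.rank = n) (γ : ℤ) (hγ : 0 < γ)
    (hdvd : ∀ k ∈ detSet A, γ ∣ k)
    (hgcd : ∀ c : ℤ, (∀ k ∈ detSet A, c ∣ k) → c ∣ γ) :
    ∃ (A' : Matrix (Fin m) (Fin n) ℤ) (Q : Matrix (Fin n) (Fin n) ℤ) (dg : Fin n → ℤ),
      (Q.det = 1 ∨ Q.det = -1) ∧ (∀ i, 0 < dg i) ∧ (∏ i, dg i) = γ ∧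
      A' * Matrix.diagonal dg = A * Q ∧
      detSet A' = (fun k => k / γ) '' detSet A := by
  obtain ⟨Q, P, B, d, hQ, hBP, hAQ, hd⟩ := A.exists_isUnit_det_mul_eq_mul_diagonal_pos hrank
  have hminor := abs_det_submatrix_eq_prod_mul_of_mul_eq_mul_diagonal hQ hAQ hd
  have hdγ : ∏ i, d i ∣ γ :=
    hgcd _ fun k ⟨p, _, hk⟩ ↦ hk ▸ (hminor p).symm ▸ dvd_mul_right _ _
  have hγd : γ ∣ ∏ i, d i := by
    have h := dvd_det_mul_of_forall_dvd_det_submatrix B (A * Q) fun p hp ↦ by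
      rw [det_submatrix_mul]
      exact ((dvd_abs _ _).1 (hdvd _ ⟨p, hp, rfl⟩)).mul_right _
    rwa [hAQ, ← Matrix.mul_assoc, hBP, Matrix.one_mul, det_diagonal] at h
  have hprod : ∏ i, d i = γ :=
    Int.dvd_antisymm (Finset.prod_pos fun i _ ↦ hd i).le hγ.le hdγ hγd
  refine ⟨P, Q, d, Int.isUnit_iff.1 hQ, hd, hprod, hAQ.symm, ?_⟩
  rw [detSet_eq_image_mul (A := A) (c := γ) (hprod ▸ hminor), Set.image_image]
  simp [Int.mul_ediv_cancel_left _ hγ.ne']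

/-- Dividing out the gcd `γ` of `D(A)`: there are a unimodular `Q` and a positive diagonal
matrix `S` with `∏ diag = γ` such that `A' := A·Q·S⁻¹` is integral (i.e. `A'·S = A·Q`)
and `D(A') = {k/γ : k ∈ D(A)}`. -/
theorem stmt2 (m n : ℕ) (hmn : n ≤ m) (A : Matrix (Fin m) (Fin n) ℤ)
    (hrank : A.rank = n) (γ : ℤ) (hγ : 0 < γ)
    (hdvd : ∀ k ∈ detSet A, γ ∣ k)
    (hgcd : ∀ c : ℤ, (∀ k ∈ detSet A, c ∣ k) → c ∣ γ) :
    ∃ (A' : Matrix (Fin m) (Fin n) ℤ) (Q : Matrix (Fin n) (Fin n) ℤ) (dg : Fin n → ℤ),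
      (Q.det = 1 ∨ Q.det = -1) ∧ (∀ i, 0 < dg i) ∧ (∏ i, dg i) = γ ∧
      A' * Matrix.diagonal dg = A * Q ∧
      detSet A' = (fun k => k / γ) '' detSet A :=
  stmt2_general m n A hrank γ hγ hdvd hgcd
end

section
/- Let a > b > 0 be integers with 2·b ≠ a. Let A ∈ ℤ^{m×n} with m ≥ n have the block form A = [L 0 u; 0 R w], where L ∈ ℤ^{m₁×n₁} and R ∈ ℤ^{m₂×n₂} have all entries in {0, 1, −1}, n₁ + n₂ = n − 1, m₁ + m₂ = m, u ∈ {0,a}^{m₁} has at least one nonzero entry, w ∈ {0,b}^{m₂} has at least one nonzero entry, and the rows of A include the unit vectors e₁, …, e_{n−1} ∈ ℤ^n. If D(A) ⊆ {a, b, 0}, then L and R are totally unimodular. -/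
open Function

namespace Matrix

section Condensation

variable {R : Type*} [CommRing R] {s : ℕ}

/-- Chiò condensation of `M` with pivot `M 0 0`. -/
def condensation (M : Matrix (Fin (s + 1)) (Fin (s + 1)) R) : Matrix (Fin s) (Fin s) R :=
  of fun i j => M 0 0 * M i.succ j.succ - M i.succ 0 * M 0 j.succ

theorem condensation_submatrix {t : ℕ} (M : Matrix (Fin (s + 1)) (Fin (s + 1)) R)
    (f g : Fin t → Fin s) :
    (condensation M).submatrix f g =
      condensation (M.submatrix (Fin.cons 0 (Fin.succ ∘ f)) (Fin.cons 0 (Fin.succ ∘ g))) := by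
  ext i j
  simp [condensation]

theorem pivot_mul_det_condensation (M : Matrix (Fin (s + 1)) (Fin (s + 1)) R) :
    M 0 0 * (condensation M).det = M 0 0 ^ s * M.det := by
  let E : Matrix (Fin (s + 1)) (Fin (s + 1)) R := of fun i j =>
    if i = 0 then (if j = 0 then 1 else 0)
    else (if j = i then M 0 0 else 0) - (if j = 0 then M i 0 else 0)
  have hE : E.det = M 0 0 ^ s := by
    have hlower : E.IsLowerTriangular := by
      intro i j (hij : i < j)
      simp [E, ((Fin.zero_le i).trans_lt hij).ne', hij.ne']
    rw [det_of_isLowerTriangular E hlower, Fin.prod_univ_succ]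
    simp [E, Fin.succ_ne_zero]
  have hEM_zero : ∀ j, (E * M) 0 j = M 0 j := by
    intro j
    simp [E, mul_apply]
  have hEM_succ : ∀ (i : Fin s) j, (E * M) i.succ j = M 0 0 * M i.succ j - M i.succ 0 * M 0 j := by
    intro i j
    simp [E, mul_apply, sub_mul, Finset.sum_sub_distrib, ite_mul, Fin.succ_ne_zero]
  have hcond : (E * M).submatrix Fin.succ Fin.succ = condensation M := by
    ext i j
    simp [hEM_succ, condensation]
  have hEM : (E * M).det = M 0 0 * (condensation M).det := by
    rw [det_succ_column_zero, Fin.sum_univ_succ]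
    simp [hEM_zero, hEM_succ, hcond, mul_comm (M 0 0)]
  rw [← hEM, det_mul, hE]

theorem abs_det_condensation [LinearOrder R] [IsStrictOrderedRing R]
    (M : Matrix (Fin (s + 1)) (Fin (s + 1)) R) (hM : |M 0 0| = 1) :
    |(condensation M).det| = |M.det| := by
  simpa [abs_mul, abs_pow, hM] using congrArg abs (pivot_mul_det_condensation M)

end Condensation

theorem abs_det_le_two_of_abs_minor_le_one {k : ℕ} (B : Matrix (Fin k) (Fin k) ℤ)
    (hentry : ∀ i j, |B i j| ≤ 1)
    (hminor : ∀ s < k, ∀ f g : Fin s → Fin k, Injective f → Injective g →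
      |(B.submatrix f g).det| ≤ 1) :
    |B.det| ≤ 2 := by
  induction k with
  | zero => simp
  | succ k ih =>
  rcases k with _ | _ | k
  · simpa [det_fin_one] using (hentry 0 0).trans (by norm_num : (1 : ℤ) ≤ 2)
  · rw [det_fin_two]
    calc |B 0 0 * B 1 1 - B 0 1 * B 1 0| ≤ |B 0 0| * |B 1 1| + |B 0 1| * |B 1 0| := by
          simpa only [abs_mul] using abs_sub (B 0 0 * B 1 1) (B 0 1 * B 1 0)
      _ ≤ 1 * 1 + 1 * 1 := by gcongr <;> apply hentry
      _ = 2 := by norm_num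
  by_cases hB : B.det = 0
  · simp [hB]
  obtain ⟨p, q, hpq⟩ : ∃ p q, B p q ≠ 0 := by
    by_contra! h
    exact hB (det_eq_zero_of_row_eq_zero 0 fun j => h 0 j)
  set C := B.submatrix (Equiv.swap 0 p) (Equiv.swap 0 q)
  have hC00 : |C 0 0| = 1 := le_antisymm (hentry p q) (Int.one_le_abs (by simpa [C] using hpq))
  have hcons : ∀ {t} (f : Fin t → Fin (k + 2)), Injective f →
      Injective (Fin.cons 0 (Fin.succ ∘ f) : Fin (t + 1) → Fin (k + 3)) := fun f hf =>
    Fin.cons_injective_iff.mpr ⟨by simp [Fin.succ_ne_zero], Fin.succ_injective _ |>.comp hf⟩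
  have hcond : ∀ t < k + 2, ∀ f g : Fin t → Fin (k + 2), Injective f → Injective g →
      |((condensation C).submatrix f g).det| ≤ 1 := by
    intro t ht f g hf hg
    rw [condensation_submatrix, abs_det_condensation _ (by simpa using hC00)]
    simpa only [C, submatrix_submatrix] using hminor (t + 1) (by omega) _ _
      ((Equiv.injective _).comp (hcons f hf)) ((Equiv.injective _).comp (hcons g hg))
  have hcond_entry : ∀ i j, |condensation C i j| ≤ 1 := fun i j => by
    simpa using hcond 1 (by omega) (fun _ => i) (fun _ => j) (injective_of_subsingleton _)
      (injective_of_subsingleton _)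
  calc |B.det| = |C.det| := (abs_det_submatrix_equiv_equiv _ _ _).symm
    _ = |(condensation C).det| := (abs_det_condensation C hC00).symm
    _ ≤ 2 := ih _ hcond_entry hcond

theorem isTotallyUnimodular_of_abs_det_ne_two {m n : Type*} {B : Matrix m n ℤ}
    (hentry : ∀ i j, |B i j| ≤ 1)
    (hne : ∀ k (f : Fin k → m) (g : Fin k → n), Injective f → Injective g →
      |(B.submatrix f g).det| ≠ 2) :
    B.IsTotallyUnimodular := by
  suffices h : ∀ k (f : Fin k → m) (g : Fin k → n), Injective f → Injective g →
      |(B.submatrix f g).det| ≤ 1 by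
    intro k f g hf hg
    rw [SignType.range_eq]
    simpa [or_comm, or_left_comm] using Int.abs_le_one_iff.mp (h k f g hf hg)
  intro k
  induction k using Nat.strong_induction_on with
  | _ k ih =>
  intro f g hf hg
  have htwo := abs_det_le_two_of_abs_minor_le_one (B.submatrix f g) (fun i j => hentry _ _)
    fun s hs f' g' hf' hg' => by
      simpa only [submatrix_submatrix] using ih s hs _ _ (hf.comp hf') (hg.comp hg')
  have := hne k f g hf hg
  omega

theorem exists_det_submatrix_eq_mul_det {R m n : Type*} [CommRing R] [Fintype n] [DecidableEq n]
    (A : Matrix m n R) (j₀ : n) (hunit : ∀ j ≠ j₀, ∃ i, A i = Pi.single j 1)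
    {k : ℕ} {f : Fin k → m} {g : Fin k → n} (hf : Injective f) (hg : Injective g)
    (hgj₀ : ∀ l, g l ≠ j₀) {i₀ : m} (hi₀f : i₀ ∉ Set.range f) (hi₀g : ∀ l, A i₀ (g l) = 0)
    (hi₀j₀ : A i₀ j₀ ≠ 0) (hdet : (A.submatrix f g).det ≠ 0) :
    ∃ F : n → m, Injective F ∧ (A.submatrix F id).det = A i₀ j₀ * (A.submatrix f g).det := by
  classical
  have : Nontrivial R := nontrivial_of_ne _ _ hi₀j₀
  -- Add the row `i₀` and a unit row `ν c` for every other column `c`; in the order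
  -- `(g, j₀, C)` of columns the result is block triangular with diagonal `A[f, g]`, `A i₀ j₀`, `1`.
  let C := {j : n // j ≠ j₀ ∧ j ∉ Set.range g}
  choose ν hν using fun c : C => hunit c.1 c.2.1
  let γ : (Fin k ⊕ Unit) ⊕ C → n := Sum.elim (Sum.elim g fun _ => j₀) Subtype.val
  let ρ : (Fin k ⊕ Unit) ⊕ C → m := Sum.elim (Sum.elim f fun _ => i₀) ν
  have hγinj : Injective γ := by
    refine (hg.sumElim (injective_of_subsingleton _) fun l _ => hgj₀ l).sumElim
      Subtype.val_injective ?_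
    rintro (l | _) c h
    · exact c.2.2 ⟨l, h⟩
    · exact c.2.1 h.symm
  have hγsurj : Surjective γ := by
    intro j
    by_cases hj : j = j₀
    · exact ⟨.inl (.inr ()), hj.symm⟩
    by_cases hjg : j ∈ Set.range g
    · obtain ⟨l, rfl⟩ := hjg
      exact ⟨.inl (.inl l), rfl⟩
    · exact ⟨.inr ⟨j, hj, hjg⟩, rfl⟩
  have hρinj : Injective ρ := by
    refine (hf.sumElim (injective_of_subsingleton _) fun l _ h => hi₀f ⟨l, h⟩).sumElim
      (fun c c' h => ?_) ?_
    · by_contra hcc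
      have := congrFun ((hν c).symm.trans ((congrArg A h).trans (hν c'))) c.1
      simp [Pi.single_eq_of_ne (Subtype.val_injective.ne hcc)] at this
    · rintro (l | _) c h <;> simp only [Sum.elim_inl, Sum.elim_inr] at h
      · refine hdet (det_eq_zero_of_row_eq_zero l fun l' => ?_)
        simp [h, hν, Pi.single_eq_of_ne fun h' : g l' = c.1 => c.2.2 ⟨l', h'⟩]
      · exact hi₀j₀ (by simp [h, hν, Pi.single_eq_of_ne c.2.1.symm])
  let e := Equiv.ofBijective γ ⟨hγinj, hγsurj⟩
  refine ⟨ρ ∘ e.symm, hρinj.comp e.symm.injective, ?_⟩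
  rw [← det_submatrix_equiv_self e, submatrix_submatrix,
    show (ρ ∘ e.symm) ∘ e = ρ by ext; simp]
  set N := A.submatrix ρ γ
  change N.det = _
  have hN₂₁ : N.toBlocks₂₁ = 0 := by
    ext c x
    show A (ν c) (γ (.inl x)) = 0
    rw [hν]
    exact Pi.single_eq_of_ne (hγinj.ne Sum.inl_ne_inr) 1
  have hN₂₂ : N.toBlocks₂₂ = 1 := by
    ext c d
    show A (ν c) d.1 = (1 : Matrix C C R) c d
    simp only [hν, one_eq_pi_single, Pi.single_apply, Subtype.coe_inj]
  have hN₁₁ : N.toBlocks₁₁.toBlocks₂₁ = 0 := by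
    ext u l
    exact hi₀g l
  rw [← fromBlocks_toBlocks N, hN₂₁, hN₂₂, det_fromBlocks_zero₂₁, det_one, mul_one,
    ← fromBlocks_toBlocks N.toBlocks₁₁, hN₁₁, det_fromBlocks_zero₂₁,
    det_unique N.toBlocks₁₁.toBlocks₂₂, mul_comm]
  rfl

theorem IsTotallyUnimodular.det_eq_zero_or_one_or_neg_one {R m n : Type*} [CommRing R]
    {A : Matrix m n R} (hA : A.IsTotallyUnimodular) {k : ℕ} {f : Fin k → m} {g : Fin k → n}
    (hf : Injective f) (hg : Injective g) :
    (A.submatrix f g).det = 0 ∨ (A.submatrix f g).det = 1 ∨ (A.submatrix f g).det = -1 := by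
  obtain ⟨σ, hσ⟩ := hA k f g hf hg
  rw [← hσ]
  cases σ <;> simp

end Matrix

theorem abs_mul_abs_det_submatrix_mem_detSet {m n : ℕ} (A : Matrix (Fin m) (Fin (n + 1)) ℤ)
    (hunits : ∀ k < n, ∃ i, ∀ j : Fin (n + 1), A i j = if (j : ℕ) = k then 1 else 0)
    {k : ℕ} {f : Fin k → Fin m} {g : Fin k → Fin (n + 1)} (hf : Injective f) (hg : Injective g)
    (hgn : ∀ l, (g l : ℕ) < n) {i₀ : Fin m} (hi₀f : i₀ ∉ Set.range f)
    (hi₀g : ∀ l, A i₀ (g l) = 0) (hi₀n : A i₀ (Fin.last n) ≠ 0)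
    (hdet : (A.submatrix f g).det ≠ 0) :
    |A i₀ (Fin.last n)| * |(A.submatrix f g).det| ∈ detSet A := by
  have hunit : ∀ j ≠ Fin.last n, ∃ i, A i = Pi.single j 1 := fun j hj =>
    (hunits j (Fin.val_lt_last hj)).imp fun i hi => funext fun j' => by
      simp only [hi, Pi.single_apply, Fin.val_inj]
  obtain ⟨F, hF, hFdet⟩ := A.exists_det_submatrix_eq_mul_det (Fin.last n) hunit hf hg
    (fun l => Fin.ne_of_val_ne (hgn l).ne) hi₀f hi₀g hi₀n hdet
  exact ⟨F, hF, by rw [hFdet, abs_mul]⟩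

theorem stmt5_general (a b : ℤ) (m₁ m₂ n₁ n₂ : ℕ) (hab : a > b) (hb : 0 < b) (hdup : 2 * b ≠ a)
    (A : Matrix (Fin (m₁ + m₂)) (Fin (n₁ + n₂ + 1)) ℤ)
    (hL : ∀ (i : Fin (m₁ + m₂)) (j : Fin (n₁ + n₂ + 1)), (i : ℕ) < m₁ → (j : ℕ) < n₁ →
      A i j = 0 ∨ A i j = 1 ∨ A i j = -1)
    (hzero₁ : ∀ (i : Fin (m₁ + m₂)) (j : Fin (n₁ + n₂ + 1)), (i : ℕ) < m₁ →
      n₁ ≤ (j : ℕ) → (j : ℕ) < n₁ + n₂ → A i j = 0)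
    (hzero₂ : ∀ (i : Fin (m₁ + m₂)) (j : Fin (n₁ + n₂ + 1)), m₁ ≤ (i : ℕ) →
      (j : ℕ) < n₁ → A i j = 0)
    (hu : ∀ i : Fin (m₁ + m₂), (i : ℕ) < m₁ →
      A i (Fin.last (n₁ + n₂)) = 0 ∨ A i (Fin.last (n₁ + n₂)) = a)
    (hw : ∀ i : Fin (m₁ + m₂), m₁ ≤ (i : ℕ) →
      A i (Fin.last (n₁ + n₂)) = 0 ∨ A i (Fin.last (n₁ + n₂)) = b)
    (hua : ∃ i : Fin (m₁ + m₂), (i : ℕ) < m₁ ∧ A i (Fin.last (n₁ + n₂)) ≠ 0)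
    (hwb : ∃ i : Fin (m₁ + m₂), m₁ ≤ (i : ℕ) ∧ A i (Fin.last (n₁ + n₂)) ≠ 0)
    (hunits : ∀ k : ℕ, k < n₁ + n₂ → ∃ i : Fin (m₁ + m₂),
      ∀ j : Fin (n₁ + n₂ + 1), A i j = if (j : ℕ) = k then 1 else 0)
    (hsub : detSet A ⊆ {a, b, 0}) :
    -- L is totally unimodular
    (∀ (k : ℕ) (f : Fin k → Fin (m₁ + m₂)) (g : Fin k → Fin (n₁ + n₂ + 1)),
      Function.Injective f → Function.Injective g →
      (∀ i, (f i : ℕ) < m₁) → (∀ i, (g i : ℕ) < n₁) →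
      (A.submatrix f g).det = 0 ∨ (A.submatrix f g).det = 1 ∨ (A.submatrix f g).det = -1) ∧
    -- R is totally unimodular
    (∀ (k : ℕ) (f : Fin k → Fin (m₁ + m₂)) (g : Fin k → Fin (n₁ + n₂ + 1)),
      Function.Injective f → Function.Injective g →
      (∀ i, m₁ ≤ (f i : ℕ)) → (∀ i, n₁ ≤ (g i : ℕ) ∧ (g i : ℕ) < n₁ + n₂) →
      (A.submatrix f g).det = 0 ∨ (A.submatrix f g).det = 1 ∨ (A.submatrix f g).det = -1) := by
  refine ⟨fun k f g hf hg hfL hgL => ?_, fun k f g hf hg hfR hgR => ?_⟩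
  · obtain ⟨i₀, hi₀R, hi₀⟩ := hwb
    have hTU : (A.submatrix (Subtype.val : {i : Fin (m₁ + m₂) // (i : ℕ) < m₁} → _)
        (Subtype.val : {j : Fin (n₁ + n₂ + 1) // (j : ℕ) < n₁} → _)).IsTotallyUnimodular := by
      refine Matrix.isTotallyUnimodular_of_abs_det_ne_two
        (fun i j => Int.abs_le_one_iff.mpr (hL _ _ i.2 j.2)) fun k f g hf hg h2 => ?_
      rw [Matrix.submatrix_submatrix] at h2
      have := hsub <| abs_mul_abs_det_submatrix_mem_detSet A hunits
        (Subtype.val_injective.comp hf) (Subtype.val_injective.comp hg)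
        (fun l => (g l).2.trans_le (Nat.le_add_right _ _))
        (by rintro ⟨l, rfl⟩; exact (f l).2.not_ge hi₀R)
        (fun l => hzero₂ _ _ hi₀R (g l).2) hi₀ (fun h0 => by simp [h0] at h2)
      rw [(hw i₀ hi₀R).resolve_left hi₀, abs_of_pos hb, h2] at this
      simp only [Set.mem_insert_iff, Set.mem_singleton_iff] at this
      omega
    exact hTU.det_eq_zero_or_one_or_neg_one (f := fun l => ⟨f l, hfL l⟩)
      (g := fun l => ⟨g l, hgL l⟩) (fun x y h => hf (congrArg Subtype.val h))
      (fun x y h => hg (congrArg Subtype.val h))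
  · obtain ⟨i₁, hi₁L, hi₁⟩ := hua
    rcases eq_or_ne (A.submatrix f g).det 0 with h0 | h0
    · exact .inl h0
    have := hsub <| abs_mul_abs_det_submatrix_mem_detSet A hunits hf hg (fun l => (hgR l).2)
      (by rintro ⟨l, rfl⟩; exact hi₁L.not_ge (hfR l))
      (fun l => hzero₁ _ _ hi₁L (hgR l).1 (hgR l).2) hi₁ h0
    rw [(hu i₁ hi₁L).resolve_left hi₁, abs_of_pos (hb.trans hab)] at this
    have hpos := abs_pos.mpr h0
    refine Int.abs_le_one_iff.mp ?_
    simp only [Set.mem_insert_iff, Set.mem_singleton_iff] at this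
    rcases this with h | h | h <;> nlinarith

/-- If `A = [L 0 u; 0 R w]` (`a > b > 0`, `2b ≠ a`) with `L,R` having `{0,±1}` entries,
`u ∈ {0,a}^{m₁}` and `w ∈ {0,b}^{m₂}` each with a nonzero entry, the rows containing the
first `n-1` unit vectors, and `D(A) ⊆ {a,b,0}`, then `L` and `R` are totally unimodular. -/
theorem stmt5 (a b : ℤ) (m₁ m₂ n₁ n₂ : ℕ) (hab : a > b) (hb : 0 < b) (hdup : 2 * b ≠ a)
    (hmn : n₁ + n₂ + 1 ≤ m₁ + m₂)
    (A : Matrix (Fin (m₁ + m₂)) (Fin (n₁ + n₂ + 1)) ℤ)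
    (hL : ∀ (i : Fin (m₁ + m₂)) (j : Fin (n₁ + n₂ + 1)), (i : ℕ) < m₁ → (j : ℕ) < n₁ →
      A i j = 0 ∨ A i j = 1 ∨ A i j = -1)
    (hzero₁ : ∀ (i : Fin (m₁ + m₂)) (j : Fin (n₁ + n₂ + 1)), (i : ℕ) < m₁ →
      n₁ ≤ (j : ℕ) → (j : ℕ) < n₁ + n₂ → A i j = 0)
    (hzero₂ : ∀ (i : Fin (m₁ + m₂)) (j : Fin (n₁ + n₂ + 1)), m₁ ≤ (i : ℕ) →
      (j : ℕ) < n₁ → A i j = 0)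
    (hR : ∀ (i : Fin (m₁ + m₂)) (j : Fin (n₁ + n₂ + 1)), m₁ ≤ (i : ℕ) →
      n₁ ≤ (j : ℕ) → (j : ℕ) < n₁ + n₂ → A i j = 0 ∨ A i j = 1 ∨ A i j = -1)
    (hu : ∀ i : Fin (m₁ + m₂), (i : ℕ) < m₁ →
      A i (Fin.last (n₁ + n₂)) = 0 ∨ A i (Fin.last (n₁ + n₂)) = a)
    (hw : ∀ i : Fin (m₁ + m₂), m₁ ≤ (i : ℕ) →
      A i (Fin.last (n₁ + n₂)) = 0 ∨ A i (Fin.last (n₁ + n₂)) = b)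
    (hua : ∃ i : Fin (m₁ + m₂), (i : ℕ) < m₁ ∧ A i (Fin.last (n₁ + n₂)) ≠ 0)
    (hwb : ∃ i : Fin (m₁ + m₂), m₁ ≤ (i : ℕ) ∧ A i (Fin.last (n₁ + n₂)) ≠ 0)
    (hunits : ∀ k : ℕ, k < n₁ + n₂ → ∃ i : Fin (m₁ + m₂),
      ∀ j : Fin (n₁ + n₂ + 1), A i j = if (j : ℕ) = k then 1 else 0)
    (hsub : detSet A ⊆ {a, b, 0}) :
    -- L is totally unimodular
    (∀ (k : ℕ) (f : Fin k → Fin (m₁ + m₂)) (g : Fin k → Fin (n₁ + n₂ + 1)),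
      Function.Injective f → Function.Injective g →
      (∀ i, (f i : ℕ) < m₁) → (∀ i, (g i : ℕ) < n₁) →
      (A.submatrix f g).det = 0 ∨ (A.submatrix f g).det = 1 ∨ (A.submatrix f g).det = -1) ∧
    -- R is totally unimodular
    (∀ (k : ℕ) (f : Fin k → Fin (m₁ + m₂)) (g : Fin k → Fin (n₁ + n₂ + 1)),
      Function.Injective f → Function.Injective g →
      (∀ i, m₁ ≤ (f i : ℕ)) → (∀ i, n₁ ≤ (g i : ℕ) ∧ (g i : ℕ) < n₁ + n₂) →
      (A.submatrix f g).det = 0 ∨ (A.submatrix f g).det = 1 ∨ (A.submatrix f g).det = -1) :=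
  stmt5_general a b m₁ m₂ n₁ n₂ hab hb hdup A hL hzero₁ hzero₂ hu hw hua hwb hunits hsub
end

section
/- Let a > b > 0 be integers with gcd(a,b) = 1, and let A ∈ ℤ^{m×n} with m ≥ n and rank(A) = n be {a,b,0}-modular. Then the greatest common divisor of all (n−1)×(n−1) subdeterminants of A equals 1 (equivalently, the (n−1)-th determinantal divisor of A is 1). -/
open Function

theorem dvd_det_of_forall_dvd_det_submatrix {R : Type*} [CommRing R] {k : ℕ}
    (M : Matrix (Fin (k + 1)) (Fin (k + 1)) R) (c : R)
    (hc : ∀ f g : Fin k → Fin (k + 1), Injective f → Injective g → c ∣ (M.submatrix f g).det) :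
    c ∣ M.det := by
  rw [Matrix.det_succ_row_zero]
  exact Finset.dvd_sum fun j _ ↦ Dvd.dvd.mul_left
    (hc _ _ (Fin.succ_injective k) Fin.succAbove_right_injective) _

theorem detSet_of_fin_zero {m : ℕ} (A : Matrix (Fin m) (Fin 0) ℤ) : detSet A = {1} := by
  ext d
  simp [detSet, Matrix.det_fin_zero, Injective]

theorem dvd_of_mem_detSet_of_forall_dvd_det_submatrix {m k : ℕ}
    (A : Matrix (Fin m) (Fin (k + 1)) ℤ) (c : ℤ)
    (hc : ∀ (f : Fin k → Fin m) (g : Fin k → Fin (k + 1)),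
      Injective f → Injective g → c ∣ (A.submatrix f g).det)
    {d : ℤ} (hd : d ∈ detSet A) : c ∣ d := by
  obtain ⟨f, hf, rfl⟩ := hd
  refine (dvd_abs c _).mpr (dvd_det_of_forall_dvd_det_submatrix _ c fun f' g' hf' hg' ↦ ?_)
  rw [Matrix.submatrix_submatrix]
  exact hc _ _ (hf.comp hf') hg'

theorem stmt10_general (a b : ℤ) (m n : ℕ) (hgcd : Int.gcd a b = 1)
    (A : Matrix (Fin m) (Fin n) ℤ)
    (hmod : detSet A = {a, b, 0}) :
    ∀ c : ℤ, (∀ (f : Fin (n - 1) → Fin m) (g : Fin (n - 1) → Fin n),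
      Function.Injective f → Function.Injective g → c ∣ (A.submatrix f g).det) →
      c = 1 ∨ c = -1 := by
  intro c hc
  cases n with
  | zero =>
    have h0 : (0 : ℤ) ∈ detSet A := by simp [hmod]
    simp [detSet_of_fin_zero] at h0
  | succ k =>
    have hdvd {d : ℤ} (hd : d ∈ ({a, b, 0} : Set ℤ)) : c ∣ d :=
      dvd_of_mem_detSet_of_forall_dvd_det_submatrix A c hc (hmod ▸ hd)
    have hcoprime : IsCoprime a b := Int.isCoprime_iff_gcd_eq_one.mpr hgcd
    exact Int.isUnit_iff.mp (hcoprime.isUnit_of_dvd' (hdvd (by simp)) (hdvd (by simp)))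

/-- For an `{a,b,0}`-modular matrix with `a > b > 0` and `gcd(a,b) = 1`, the gcd of all
`(n-1) × (n-1)` subdeterminants of `A` is `1`: every common divisor of all
`(n-1) × (n-1)` subdeterminants is `±1`. -/
theorem stmt10 (a b : ℤ) (m n : ℕ) (hab : a > b) (hb : 0 < b) (hgcd : Int.gcd a b = 1)
    (hmn : n ≤ m) (A : Matrix (Fin m) (Fin n) ℤ) (hrank : A.rank = n)
    (hmod : detSet A = {a, b, 0}) :
    ∀ c : ℤ, (∀ (f : Fin (n - 1) → Fin m) (g : Fin (n - 1) → Fin n),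
      Function.Injective f → Function.Injective g → c ∣ (A.submatrix f g).det) →
      c = 1 ∨ c = -1 :=
  stmt10_general a b m n hgcd A hmod
end

section
/- Let a > b > 0 be integers, and let A ∈ ℤ^{m×n} with m ≥ n ≥ 2 be {a,b,0}-modular such that the topmost n−1 rows of A are the unit vectors e₁, …, e_{n−1} ∈ ℤ^n and all entries of the n-th column of A are nonnegative. Then every entry of the n-th column of A lies in {0, a, b}, at least one entry of the n-th column equals b, and if moreover b does not divide a, then at least one entry of the n-th column equals a. -/
theorem Matrix.det_eq_of_castSucc_rows_eq_single {R : Type*} [CommRing R] {k : ℕ}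
    (B : Matrix (Fin (k + 1)) (Fin (k + 1)) R)
    (h : ∀ l : Fin k, B l.castSucc = Pi.single l.castSucc 1) :
    B.det = B (Fin.last k) (Fin.last k) := by
  have hlower : B.IsLowerTriangular := by
    intro i j hij
    obtain ⟨l, rfl⟩ := Fin.exists_castSucc_eq.mpr (Fin.ne_last_of_lt (show i < j from hij))
    rw [h l]
    exact Pi.single_eq_of_ne (show l.castSucc < j from hij).ne' _
  simp [Matrix.det_of_isLowerTriangular B hlower, Fin.prod_univ_castSucc, h]

theorem Matrix.dvd_det_of_dvd_col {R : Type*} [CommRing R] {n : Type*} [Fintype n]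
    [DecidableEq n] (B : Matrix n n R) (j : n) {c : R} (hc : ∀ i, c ∣ B i j) : c ∣ B.det := by
  rw [Matrix.det_apply']
  exact Finset.dvd_sum fun σ _ => Dvd.dvd.mul_left
    ((hc (σ j)).trans (Finset.dvd_prod_of_mem (fun i => B (σ i) i) (Finset.mem_univ j))) _

section detSet

variable {m n : ℕ}

theorem dvd_of_mem_detSet {A : Matrix (Fin m) (Fin n) ℤ} {j : Fin n} {c d : ℤ}
    (hc : ∀ i, c ∣ A i j) (hd : d ∈ detSet A) : c ∣ d := by
  obtain ⟨f, -, rfl⟩ := hd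
  exact (dvd_abs _ _).mpr ((A.submatrix f id).dvd_det_of_dvd_col j fun i => hc (f i))

theorem exists_col_eq_of_mem_detSet {A : Matrix (Fin m) (Fin n) ℤ} {j : Fin n} {c d e : ℤ}
    (hcol : ∀ i, A i j = 0 ∨ A i j = c ∨ A i j = e) (hd : d ∈ detSet A) (hcd : ¬ c ∣ d) :
    ∃ i, A i j = e := by
  by_contra! hne
  refine hcd (dvd_of_mem_detSet (j := j) (fun i => ?_) hd)
  rcases hcol i with h | h | h
  · simp [h]
  · simp [h]
  · exact absurd h (hne i)

theorem abs_apply_last_mem_detSet {k : ℕ} (A : Matrix (Fin m) (Fin (k + 1)) ℤ)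
    (hunit : ∀ i : Fin m, (i : ℕ) < k →
      ∀ j : Fin (k + 1), A i j = if (i : ℕ) = (j : ℕ) then 1 else 0)
    (i : Fin m) (hi : k ≤ i) : |A i (Fin.last k)| ∈ detSet A := by
  have hkm : k ≤ m := hi.trans i.is_lt.le
  let f : Fin (k + 1) → Fin m := Fin.snoc (Fin.castLE hkm) i
  have hf : Function.Injective f := by
    refine Fin.snoc_injective_of_injective (Fin.castLE_injective hkm) ?_
    rintro ⟨l, hl⟩
    have := congrArg Fin.val hl
    simp only [Fin.val_castLE] at this
    omega
  refine ⟨f, hf, ?_⟩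
  rw [Matrix.det_eq_of_castSucc_rows_eq_single]
  · simp [f]
  · intro l
    funext j
    simp [f, hunit (Fin.castLE hkm l) l.is_lt, Pi.single_apply, Fin.ext_iff, eq_comm]

end detSet

theorem stmt11_general (a b : ℤ) (m n : ℕ) (hab : a > b) (hb : 0 < b)
    (hn : 2 ≤ n)
    (A : Matrix (Fin m) (Fin n) ℤ) (hmod : detSet A = {a, b, 0})
    (hunit : ∀ i : Fin m, (i : ℕ) < n - 1 →
      ∀ j : Fin n, A i j = if (i : ℕ) = (j : ℕ) then 1 else 0)
    (hnonneg : ∀ (i : Fin m) (j : Fin n), (j : ℕ) = n - 1 → 0 ≤ A i j) :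
    (∀ (i : Fin m) (j : Fin n), (j : ℕ) = n - 1 → A i j = 0 ∨ A i j = a ∨ A i j = b) ∧
    (∃ (i : Fin m) (j : Fin n), (j : ℕ) = n - 1 ∧ A i j = b) ∧
    (¬ b ∣ a → ∃ (i : Fin m) (j : Fin n), (j : ℕ) = n - 1 ∧ A i j = a) := by
  obtain ⟨k, rfl⟩ : ∃ k, n = k + 1 := ⟨n - 1, by omega⟩
  have hlast : ∀ j : Fin (k + 1), (j : ℕ) = k ↔ j = Fin.last k := by
    simp [Fin.ext_iff]
  simp only [Nat.add_sub_cancel] at hunit hnonneg ⊢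
  simp only [hlast, forall_eq, exists_eq_left] at hnonneg ⊢
  have hcol : ∀ i, A i (Fin.last k) = 0 ∨ A i (Fin.last k) = a ∨ A i (Fin.last k) = b := by
    intro i
    by_cases hi : (i : ℕ) < k
    · simp [hunit i hi, hi.ne]
    · have := abs_apply_last_mem_detSet A hunit i (not_lt.mp hi)
      rw [abs_of_nonneg (hnonneg i), hmod] at this
      simp only [Set.mem_insert_iff, Set.mem_singleton_iff] at this
      tauto
  refine ⟨hcol, ?_, fun hba => ?_⟩
  · exact exists_col_eq_of_mem_detSet hcol (d := b) (by simp [hmod])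
      fun hdvd => (Int.le_of_dvd hb hdvd).not_gt hab
  · exact exists_col_eq_of_mem_detSet (fun i => (hcol i).imp_right Or.symm)
      (d := a) (by simp [hmod]) hba

/-- For an `{a,b,0}`-modular matrix (`a > b > 0`) whose topmost `n-1` rows are the unit
vectors and whose `n`-th column is nonnegative: every entry of the `n`-th column lies in
`{0,a,b}`, some entry of the `n`-th column equals `b`, and if `b ∤ a` then some entry of
the `n`-th column equals `a`. -/
theorem stmt11 (a b : ℤ) (m n : ℕ) (hab : a > b) (hb : 0 < b)
    (hmn : n ≤ m) (hn : 2 ≤ n)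
    (A : Matrix (Fin m) (Fin n) ℤ) (hmod : detSet A = {a, b, 0})
    (hunit : ∀ i : Fin m, (i : ℕ) < n - 1 →
      ∀ j : Fin n, A i j = if (i : ℕ) = (j : ℕ) then 1 else 0)
    (hnonneg : ∀ (i : Fin m) (j : Fin n), (j : ℕ) = n - 1 → 0 ≤ A i j) :
    (∀ (i : Fin m) (j : Fin n), (j : ℕ) = n - 1 → A i j = 0 ∨ A i j = a ∨ A i j = b) ∧
    (∃ (i : Fin m) (j : Fin n), (j : ℕ) = n - 1 ∧ A i j = b) ∧
    (¬ b ∣ a → ∃ (i : Fin m) (j : Fin n), (j : ℕ) = n - 1 ∧ A i j = a) :=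
  stmt11_general a b m n hab hb hn A hmod hunit hnonneg
end

section
/- Let B ∈ ℤ^{m×n} with m ≤ n and rank(B) = m, let b ∈ ℤ^m, and let γ be the greatest common divisor of the elements of D(B^T). Suppose the system B·x = b has at least one solution x ∈ ℤ^n. Then there exist x₀ ∈ ℤ^n and N ∈ ℤ^{n×(n−m)} such that {x ∈ ℤ^n : B·x = b} = {x₀ + N·y : y ∈ ℤ^{n−m}} and D(N) = {k/γ : k ∈ D(B^T)}. Consequently, the map y ↦ x₀ + N·y is a bijection from {y ∈ ℤ^{n−m} : −N·y ≤ x₀} onto {x ∈ ℤ^n : B·x = b, x ≥ 0}, and the constraint matrix C := −N of this inequality system satisfies D(C) = {k/γ : k ∈ D(B^T)}. -/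
open Matrix Module Function

theorem LinearMap.exists_basis_sum_inr_mem_ker {R M M' : Type*} [CommRing R] [IsDomain R]
    [IsPrincipalIdealRing R] [AddCommGroup M] [Module R M] [Module.Free R M] [Module.Finite R M]
    [AddCommGroup M'] [Module R M'] [Module.IsTorsionFree R M'] (f : M →ₗ[R] M') {m k : ℕ}
    (hm : finrank R (range f) = m) (hmk : m + k = finrank R M) :
    ∃ b : Basis (Fin m ⊕ Fin k) R M, ∀ j, f (b (Sum.inr j)) = 0 := by
  -- `s ∘ₗ f.rangeRestrict` is a projection with kernel `ker f`, so `range s` complements `ker f`.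
  obtain ⟨s, hs⟩ := f.rangeRestrict.exists_rightInverse_of_surjective f.range_rangeRestrict
  have hs_inj : Injective s :=
    (show LeftInverse f.rangeRestrict s from LinearMap.congr_fun hs).injective
  have hproj : IsIdempotentElem (s ∘ₗ f.rangeRestrict) := by
    rw [IsIdempotentElem, Module.End.mul_eq_comp, comp_assoc, ← comp_assoc f.rangeRestrict, hs,
      id_comp]
  have hcompl : IsCompl (range s) (ker f) := by
    simpa [range_comp_of_range_eq_top _ f.range_rangeRestrict,
      ker_comp_of_ker_eq_bot _ (ker_eq_bot.mpr hs_inj)] using IsIdempotentElem.isCompl hproj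
  have hR : finrank R (range s) = m := (LinearEquiv.ofInjective s hs_inj).finrank_eq.symm.trans hm
  have hK : finrank R (ker f) = k := by
    have := (Submodule.prodEquivOfIsCompl _ _ hcompl).finrank_eq
    rw [finrank_prod] at this
    omega
  refine ⟨((finBasisOfFinrankEq R _ hR).prod (finBasisOfFinrankEq R _ hK)).map
    (Submodule.prodEquivOfIsCompl _ _ hcompl), fun j => ?_⟩
  simp

theorem Matrix.det_mul_det_toBlocks₂₂_of_mul_eq_one {R κ ν : Type*} [CommRing R] [Fintype κ]
    [Fintype ν] [DecidableEq κ] [DecidableEq ν] {F G : Matrix (κ ⊕ ν) (κ ⊕ ν) R}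
    (h : F * G = 1) : F.det * G.toBlocks₂₂.det = F.toBlocks₁₁.det := by
  obtain ⟨a, b, c, d, rfl⟩ : ∃ a b c d, F = fromBlocks a b c d :=
    ⟨_, _, _, _, (fromBlocks_toBlocks F).symm⟩
  obtain ⟨e, f, g, h', rfl⟩ : ∃ e f g h', G = fromBlocks e f g h' :=
    ⟨_, _, _, _, (fromBlocks_toBlocks G).symm⟩
  rw [fromBlocks_multiply, ← fromBlocks_one, fromBlocks_inj] at h
  obtain ⟨-, h₁₂, -, h₂₂⟩ := h
  have key : fromBlocks a b c d * fromBlocks 1 f 0 h' = fromBlocks a 0 c 1 := by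
    simp [fromBlocks_multiply, h₁₂, h₂₂]
  simpa [det_fromBlocks_zero₂₁, det_fromBlocks_zero₁₂] using congrArg det key

section Unimodular

variable {R ι κ ν : Type*} [CommRing R] {U : Matrix ι (κ ⊕ ν) R} {V : Matrix (κ ⊕ ν) ι R}

theorem Matrix.mul_eq_toCols_mul_toRows_add [Fintype κ] [Fintype ν] :
    U * V = U.toCols₁ * V.toRows₁ + U.toCols₂ * V.toRows₂ := by
  rw [← fromCols_mul_fromRows, fromCols_toCols, fromRows_toRows]

theorem Matrix.toRows₂_mul_toCols₂_eq_one [Fintype ι] [DecidableEq κ] [DecidableEq ν]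
    (hVU : V * U = 1) : V.toRows₂ * U.toCols₂ = 1 := by
  have := congrArg toBlocks₂₂ hVU
  rwa [← fromBlocks_one, toBlocks_fromBlocks₂₂] at this

theorem Matrix.eq_mul_toCols₁_mul_toRows₁ [Fintype ι] [Fintype κ] [Fintype ν] [DecidableEq ι]
    (B : Matrix κ ι R) (hUV : U * V = 1) (hB : B * U.toCols₂ = 0) :
    B = B * U.toCols₁ * V.toRows₁ := by
  calc B = B * (U * V) := by rw [hUV, Matrix.mul_one]
    _ = B * U.toCols₁ * V.toRows₁ := by
      rw [mul_eq_toCols_mul_toRows_add, Matrix.mul_add, ← Matrix.mul_assoc, ← Matrix.mul_assoc,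
        hB, Matrix.zero_mul, add_zero]

theorem Matrix.exists_eq_toCols₂_mulVec [IsDomain R] [Fintype ι] [Fintype κ] [Fintype ν]
    [DecidableEq ι] [DecidableEq κ] {B : Matrix κ ι R} (hUV : U * V = 1)
    (hB : B * U.toCols₂ = 0) (hA : (B * U.toCols₁).det ≠ 0) {x : ι → R} (hx : B *ᵥ x = 0) :
    ∃ y, x = U.toCols₂ *ᵥ y := by
  have hx₁ : V.toRows₁ *ᵥ x = 0 := by
    refine eq_zero_of_mulVec_eq_zero hA ?_
    rwa [mulVec_mulVec, ← eq_mul_toCols₁_mul_toRows₁ B hUV hB]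
  refine ⟨V.toRows₂ *ᵥ x, ?_⟩
  calc x = (U * V) *ᵥ x := by rw [hUV, one_mulVec]
    _ = U.toCols₂ *ᵥ (V.toRows₂ *ᵥ x) := by
      rw [mul_eq_toCols_mul_toRows_add, add_mulVec, ← mulVec_mulVec, ← mulVec_mulVec, hx₁,
        mulVec_zero, zero_add]

end Unimodular

theorem Matrix.exists_mul_eq_one_mul_toCols₂_eq_zero {R ι κ : Type*} [CommRing R] [IsDomain R]
    [IsPrincipalIdealRing R] [Fintype ι] [DecidableEq ι] [Fintype κ] {m k : ℕ}
    (B : Matrix κ ι R) (hrank : B.rank = m) (hmk : m + k = Fintype.card ι) :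
    ∃ (U : Matrix ι (Fin m ⊕ Fin k) R) (V : Matrix (Fin m ⊕ Fin k) ι R),
      U * V = 1 ∧ V * U = 1 ∧ B * U.toCols₂ = 0 := by
  obtain ⟨b, hb⟩ := B.mulVecLin.exists_basis_sum_inr_mem_ker hrank (by simpa using hmk)
  refine ⟨(Pi.basisFun R ι).toMatrix b, b.toMatrix (Pi.basisFun R ι),
    Basis.toMatrix_mul_toMatrix_flip _ _, Basis.toMatrix_mul_toMatrix_flip _ _, ?_⟩
  ext i j
  simpa [mul_apply, mulVec, dotProduct, Basis.toMatrix_apply] using congrFun (hb j) i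

theorem Matrix.dvd_det_mul_of_forall_dvd_det_submatrix_s12 {R κ ν : Type*} [CommRing R] [Fintype κ]
    [Fintype ν] [DecidableEq κ] (W : Matrix κ ν R) (N : Matrix ν κ R) {c : R}
    (h : ∀ g : κ → ν, Injective g → c ∣ (N.submatrix g id).det) :
    c ∣ (W * N).det := by
  have hrows : (W * N) = fun i => ∑ j, W i j • N j := by
    ext i l
    simp [mul_apply, Finset.sum_apply]
  have hexpand : (W * N).det = ∑ r : κ → ν, (∏ i, W i (r i)) • (N.submatrix r id).det := by
    rw [det, hrows, ← AlternatingMap.coe_multilinearMap, MultilinearMap.map_sum]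
    refine Finset.sum_congr rfl fun r _ => ?_
    rw [MultilinearMap.map_smul_univ]
    rfl
  rw [hexpand]
  refine Finset.dvd_sum fun r _ => ?_
  by_cases hr : Injective r
  · exact (h r hr).mul_left _
  · obtain ⟨a, b, hab, hne⟩ := not_injective_iff.mp hr
    rw [det_zero_of_row_eq hne (by ext; simp [hab]), smul_zero]
    exact dvd_zero c

theorem exists_equiv_sum_comp_inl {α β γ : Type*} [Fintype α] [Fintype β] [Fintype γ]
    {f : α → γ} (hf : Injective f) (h : Fintype.card α + Fintype.card β = Fintype.card γ) :
    ∃ e : α ⊕ β ≃ γ, e ∘ Sum.inl = f := by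
  classical
  have hβ : Fintype.card β = Fintype.card ↥(Set.range f)ᶜ := by
    rw [Fintype.card_compl_set, Set.card_range_of_injective hf]
    omega
  exact ⟨(Equiv.sumCongr (Equiv.ofInjective f hf) (Fintype.equivOfCardEq hβ)).trans
    (Equiv.Set.sumCompl _), rfl⟩

section Integer

variable {ι κ ν : Type*} [Fintype ι] [Fintype κ] [Fintype ν] [DecidableEq κ] [DecidableEq ν]
  {U : Matrix ι (κ ⊕ ν) ℤ} {V : Matrix (κ ⊕ ν) ι ℤ}

theorem Matrix.abs_det_toRows₁_submatrix_eq (hVU : V * U = 1) (e : κ ⊕ ν ≃ ι) :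
    |(V.toRows₁.submatrix id (e ∘ Sum.inl)).det| =
      |(U.toCols₂.submatrix (e ∘ Sum.inr) id).det| := by
  have hFG : V.submatrix id e * U.submatrix e id = 1 := by
    rw [submatrix_mul_equiv, hVU, submatrix_id_id]
  have hunit : |(V.submatrix id e).det| = 1 :=
    Int.isUnit_iff_abs_eq.mp (.of_mul_eq_one _ (by rw [← det_mul, hFG, det_one]))
  calc |(V.toRows₁.submatrix id (e ∘ Sum.inl)).det| = |(V.submatrix id e).toBlocks₁₁.det| := rfl
    _ = |(U.submatrix e id).toBlocks₂₂.det| := by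
      rw [← det_mul_det_toBlocks₂₂_of_mul_eq_one hFG, abs_mul, hunit, one_mul]

theorem Matrix.abs_det_submatrix_comp_inl_eq [DecidableEq ι] (B : Matrix κ ι ℤ) (hUV : U * V = 1)
    (hVU : V * U = 1) (hB : B * U.toCols₂ = 0) (e : κ ⊕ ν ≃ ι) :
    |(B.submatrix id (e ∘ Sum.inl)).det| =
      |(B * U.toCols₁).det| * |(U.toCols₂.submatrix (e ∘ Sum.inr) id).det| := by
  have hfactor : B.submatrix id (e ∘ Sum.inl) =
      B * U.toCols₁ * V.toRows₁.submatrix id (e ∘ Sum.inl) := by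
    conv_lhs => rw [eq_mul_toCols₁_mul_toRows₁ B hUV hB]
    rfl
  rw [hfactor, det_mul, abs_mul, abs_det_toRows₁_submatrix_eq hVU]

end Integer

theorem detSet_transpose_eq_image_mul {m k n : ℕ} (hmk : m + k = n)
    {B : Matrix (Fin m) (Fin n) ℤ} {U : Matrix (Fin n) (Fin m ⊕ Fin k) ℤ}
    {V : Matrix (Fin m ⊕ Fin k) (Fin n) ℤ}
    (hUV : U * V = 1) (hVU : V * U = 1) (hB : B * U.toCols₂ = 0) :
    detSet Bᵀ = (|(B * U.toCols₁).det| * ·) '' detSet U.toCols₂ := by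
  have hminor (f : Fin m → Fin n) : |(Bᵀ.submatrix f id).det| = |(B.submatrix id f).det| := by
    rw [← transpose_submatrix, det_transpose]
  ext d
  constructor
  · rintro ⟨f, hf, rfl⟩
    obtain ⟨e, rfl⟩ := exists_equiv_sum_comp_inl (β := Fin k) hf (by simp [hmk])
    exact ⟨_, ⟨e ∘ Sum.inr, e.injective.comp Sum.inr_injective, rfl⟩,
      by rw [hminor, abs_det_submatrix_comp_inl_eq B hUV hVU hB e]⟩
  · rintro ⟨_, ⟨g, hg, rfl⟩, rfl⟩
    obtain ⟨e, rfl⟩ := exists_equiv_sum_comp_inl (β := Fin m) hg (by simp [← hmk, add_comm])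
    let e' := (Equiv.sumComm (Fin m) (Fin k)).trans e
    exact ⟨e' ∘ Sum.inl, e'.injective.comp Sum.inl_injective,
      by rw [hminor, abs_det_submatrix_comp_inl_eq B hUV hVU hB e']; rfl⟩

theorem isUnit_of_forall_dvd_detSet {n k : ℕ} {N : Matrix (Fin n) (Fin k) ℤ}
    {W : Matrix (Fin k) (Fin n) ℤ} (hWN : W * N = 1) {c : ℤ} (hc : ∀ d ∈ detSet N, c ∣ d) :
    IsUnit c := by
  have := W.dvd_det_mul_of_forall_dvd_det_submatrix_s12 N fun g hg =>
    (dvd_abs _ _).mp (hc _ ⟨g, hg, rfl⟩)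
  rw [hWN, det_one] at this
  exact isUnit_of_dvd_one this

theorem detSet_neg {n k : ℕ} (N : Matrix (Fin n) (Fin k) ℤ) : detSet (-N) = detSet N := by
  have habs (g : Fin k → Fin n) : |((-N).submatrix g id).det| = |(N.submatrix g id).det| := by
    rw [show (-N).submatrix g id = -N.submatrix g id from rfl, det_neg, abs_mul, abs_pow, abs_neg,
      abs_one, one_pow, one_mul]
  ext d
  simp only [detSet, Set.mem_ofPred_eq, habs]

theorem Int.eq_abs_of_isGCD_image_mul {S : Set ℤ} {a γ : ℤ} (hγ : 0 < γ)
    (hS : ∀ c, (∀ d ∈ S, c ∣ d) → IsUnit c) (hdvd : ∀ d ∈ (a * ·) '' S, γ ∣ d)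
    (hgcd : ∀ c, (∀ d ∈ (a * ·) '' S, c ∣ d) → c ∣ γ) : γ = |a| := by
  obtain ⟨c, rfl⟩ : |a| ∣ γ :=
    hgcd _ fun _ ⟨d, _, hd⟩ => hd ▸ (abs_dvd _ _).mpr (dvd_mul_right a d)
  have ha : |a| ≠ 0 := left_ne_zero_of_mul hγ.ne'
  have hc : IsUnit c := hS c fun d hd => by
    have : |a| * c ∣ |a| * |d| := by
      rw [← abs_mul]
      exact (dvd_abs _ _).mpr (hdvd _ ⟨d, hd, rfl⟩)
    exact (dvd_abs _ _).mp ((mul_dvd_mul_iff_left ha).mp this)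
  rcases Int.isUnit_iff.mp hc with rfl | rfl
  · rw [mul_one]
  · nlinarith [abs_nonneg a]

theorem Matrix.mulVec_eq_iff_exists_eq_add_mulVec {R ι κ μ : Type*} [CommRing R] [Fintype ι]
    [Fintype κ] {B : Matrix μ ι R} {N : Matrix ι κ R} {b : μ → R} {x₀ : ι → R}
    (hx₀ : B *ᵥ x₀ = b) (hBN : B * N = 0) (hker : ∀ x, B *ᵥ x = 0 → ∃ y, x = N *ᵥ y) (x : ι → R) :
    B *ᵥ x = b ↔ ∃ y, x = x₀ + N *ᵥ y := by
  constructor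
  · intro hx
    obtain ⟨y, hy⟩ := hker (x - x₀) (by rw [mulVec_sub, hx, hx₀, sub_self])
    exact ⟨y, by rw [← hy, add_sub_cancel]⟩
  · rintro ⟨y, rfl⟩
    rw [mulVec_add, mulVec_mulVec, hBN, zero_mulVec, add_zero, hx₀]

theorem Matrix.bijOn_add_mulVec {R ι κ : Type*} [CommRing R] [PartialOrder R] [IsOrderedRing R]
    [Fintype κ] {N : Matrix ι κ R} (hN : Injective N.mulVec) {x₀ : ι → R}
    {P : (ι → R) → Prop} (hP : ∀ x, P x ↔ ∃ y, x = x₀ + N *ᵥ y) :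
    Set.BijOn (fun y => x₀ + N *ᵥ y) {y | ∀ i, -(N *ᵥ y) i ≤ x₀ i}
      {x | P x ∧ ∀ i, 0 ≤ x i} := by
  refine ⟨fun y hy => ⟨(hP _).mpr ⟨y, rfl⟩, fun i => ?_⟩, fun y _ z _ h => hN (add_left_cancel h),
    fun x ⟨hx, hx0⟩ => ?_⟩
  · simpa [neg_le_iff_add_nonneg] using hy i
  · obtain ⟨y, rfl⟩ := (hP x).mp hx
    exact ⟨y, fun i => by simpa [neg_le_iff_add_nonneg] using hx0 i, rfl⟩

/-- Reduction of a feasible standard form system `B·x = b, x ≥ 0` (with `rank B = m` and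
`γ = gcd(D(B.transpose))`) to inequality form: the integer solutions of `B·x = b` are
`{x₀ + N·y : y ∈ ℤ^{n−m}}` with `D(N) = (1/γ)·D(B.transpose)`, whence `y ↦ x₀ + N·y` is a
bijection from `{y : −N·y ≤ x₀}` onto `{x : B·x = b, x ≥ 0}`, and the constraint matrix
`C := −N` satisfies `D(C) = (1/γ)·D(B.transpose)`. -/
theorem stmt12 (m k n : ℕ) (hmk : m + k = n)
    (B : Matrix (Fin m) (Fin n) ℤ) (hrank : B.rank = m)
    (bvec : Fin m → ℤ) (γ : ℤ) (hγ : 0 < γ)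
    (hdvd : ∀ d ∈ detSet B.transpose, γ ∣ d)
    (hgcd : ∀ c : ℤ, (∀ d ∈ detSet B.transpose, c ∣ d) → c ∣ γ)
    (hfeas : ∃ x : Fin n → ℤ, B.mulVec x = bvec) :
    ∃ (x₀ : Fin n → ℤ) (N : Matrix (Fin n) (Fin k) ℤ),
      ({x : Fin n → ℤ | B.mulVec x = bvec} =
        {x : Fin n → ℤ | ∃ y : Fin k → ℤ, x = x₀ + N.mulVec y}) ∧
      detSet N = (fun d => d / γ) '' detSet B.transpose ∧
      Set.BijOn (fun y : Fin k → ℤ => x₀ + N.mulVec y)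
        {y : Fin k → ℤ | ∀ i, -(N.mulVec y i) ≤ x₀ i}
        {x : Fin n → ℤ | B.mulVec x = bvec ∧ ∀ i, 0 ≤ x i} ∧
      detSet (-N) = (fun d => d / γ) '' detSet B.transpose := by
  obtain ⟨x₀, hx₀⟩ := hfeas
  obtain ⟨U, V, hUV, hVU, hBU⟩ :=
    B.exists_mul_eq_one_mul_toCols₂_eq_zero hrank (by rw [hmk, Fintype.card_fin])
  have hD := detSet_transpose_eq_image_mul hmk hUV hVU hBU
  rw [hD] at hdvd hgcd
  have hγA : γ = |(B * U.toCols₁).det| := by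
    simpa using Int.eq_abs_of_isGCD_image_mul hγ
      (fun c => isUnit_of_forall_dvd_detSet (toRows₂_mul_toCols₂_eq_one hVU)) hdvd hgcd
  have hN : detSet U.toCols₂ = (· / γ) '' detSet Bᵀ := by
    rw [hD, Set.image_image, hγA]
    simp [Int.mul_ediv_cancel_left _ (hγA ▸ hγ.ne')]
  have hsol := mulVec_eq_iff_exists_eq_add_mulVec hx₀ hBU fun x hx =>
    exists_eq_toCols₂_mulVec hUV hBU (abs_pos.mp (hγA ▸ hγ)) hx
  have hinj : Injective U.toCols₂.mulVec := fun y z h => by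
    simpa [mulVec_mulVec, toRows₂_mul_toCols₂_eq_one hVU] using congrArg (V.toRows₂ *ᵥ ·) h
  exact ⟨x₀, U.toCols₂, Set.ext hsol, hN, bijOn_add_mulVec hinj hsol, by rw [detSet_neg, hN]⟩
end
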